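/- Let L be a union of ≈^t_k-classes and let M be its syntactic semigroup with involution induced by reversal. Then for every idempotent e and every element x of M, e·x·e⋆ = e·x⋆·e⋆. -/

import Mathlib

/-!
If `k ≤ |p|`, the words `a·p s pʳ·b` and `a·p sʳ pʳ·b` are `≈ᵗₖ`-equivalent: their boundary
words of length `k - 1` lie inside `a·p` and `pʳ·b`, and inclusion–exclusion over the overlaps
`p` and `pʳ` reduces their counts of factors of length `≤ k` to those of `a·p`, `pʳ·b` and of the
middle parts `p s pʳ` and `p sʳ pʳ`, which are mirror images of each other. As `[u]` is
idempotent, `p = u^(k+1)` represents `[u]` and `pʳ` represents `[u]⋆`, so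
`e x e⋆ = [p s pʳ] = [p sʳ pʳ] = e x⋆ e⋆`.
-/

/-- Number of occurrences of `v` or `v.reverse` in `w`. -/
def occR {A : Type*} [DecidableEq A] (w v : List A) : ℕ :=
  (List.range (w.length + 1)).countP
    (fun i => decide ((w.drop i).take v.length = v ∨ (w.drop i).take v.length = v.reverse))

/-- Equality up to threshold `t`. -/
def thrEq (t i j : ℕ) : Prop := i = j ∨ (t ≤ i ∧ t ≤ j)

/-- The `(k,t)`-locally-reversible threshold testable equivalence. -/
def LRTT {A : Type*} [DecidableEq A] (k t : ℕ) (w w' : List A) : Prop :=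
  (w.length < k ∧ (w' = w ∨ w' = w.reverse)) ∨
  (k ≤ w.length ∧ k ≤ w'.length ∧
    (∀ v : List A, v.length ≤ k → thrEq t (occR w v) (occR w' v)) ∧
    ({w.take (k - 1), (w.drop (w.length - (k - 1))).reverse} : Set (List A)) =
      {w'.take (k - 1), (w'.drop (w'.length - (k - 1))).reverse})

/-- Syntactic congruence of `L`. -/
def SynCong {A : Type*} (L : Set (List A)) (x y : List A) : Prop :=
  ∀ u v : List A, u ++ x ++ v ∈ L ↔ u ++ y ++ v ∈ L

theorem List.reverse_range (N : ℕ) :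
    (List.range N).reverse = (List.range N).map (fun i => N - 1 - i) := by
  simpa only [← List.range_eq_range', zero_add] using List.reverse_range' (s := 0) (n := N)

theorem List.drop_length_sub_append {α : Type*} (x : List α) {y : List α} {n : ℕ}
    (h : n ≤ y.length) : (x ++ y).drop ((x ++ y).length - n) = y.drop (y.length - n) := by
  rw [show (x ++ y).length - n = x.length + (y.length - n) by simp only [List.length_append]; omega,
    List.drop_length_add_append]

section

variable {A : Type*} [DecidableEq A]

def IsOccAt (w v : List A) (i : ℕ) : Bool :=
  decide ((w.drop i).take v.length = v ∨ (w.drop i).take v.length = v.reverse)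

def occFull (w v : List A) : ℕ :=
  (List.range (w.length + 1 - v.length)).countP (IsOccAt w v)

theorem isOccAt_eq_false_of_lt {w v : List A} (hv : v ≠ []) {i : ℕ}
    (h : w.length < i + v.length) : IsOccAt w v i = false := by
  have hv1 : 0 < v.length := List.length_pos_iff.mpr hv
  have hshort : ((w.drop i).take v.length).length < v.length := by
    simp only [List.length_take, List.length_drop]
    omega
  simp only [IsOccAt, decide_eq_false_iff_not]
  rintro (h1 | h1)
  · rw [h1] at hshort; omega
  · rw [h1, List.length_reverse] at hshort; omega

theorem occR_nil (w : List A) : occR w ([] : List A) = w.length + 1 := by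
  simp [occR]

theorem occR_eq_occFull (w : List A) {v : List A} (hv : v ≠ []) : occR w v = occFull w v := by
  have hsplit : w.length + 1 = (w.length + 1 - v.length) + min v.length (w.length + 1) := by
    omega
  have htail : ((List.range (min v.length (w.length + 1))).map
      (fun j => (w.length + 1 - v.length) + j)).countP (IsOccAt w v) = 0 := by
    rw [List.countP_map, List.countP_eq_zero]
    intro j hj
    have := List.mem_range.mp hj
    have hlate : w.length < (w.length + 1 - v.length + j) + v.length := by omega
    simp [isOccAt_eq_false_of_lt hv hlate]
  change (List.range (w.length + 1)).countP (IsOccAt w v) = _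
  rw [hsplit, List.range_add, List.countP_append, htail, occFull]
  rfl

theorem isOccAt_append_left (x w v : List A) (i : ℕ) :
    IsOccAt (x ++ w) v (x.length + i) = IsOccAt w v i := by
  simp only [IsOccAt, List.drop_length_add_append]

theorem isOccAt_append_right {w v : List A} (z : List A) {i : ℕ}
    (h : i + v.length ≤ w.length) : IsOccAt (w ++ z) v i = IsOccAt w v i := by
  have hfit : v.length ≤ (w.drop i).length := by rw [List.length_drop]; omega
  simp only [IsOccAt, List.drop_append, List.take_append_of_le_length hfit]

theorem occFull_append {w v : List A} (z : List A) (h : v.length ≤ w.length + 1) :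
    occFull (w ++ z) v = occFull w v + (List.range z.length).countP
      (fun j => IsOccAt (w ++ z) v (w.length + 1 - v.length + j)) := by
  have hN : (w ++ z).length + 1 - v.length = (w.length + 1 - v.length) + z.length := by
    simp only [List.length_append]; omega
  rw [occFull, hN, List.range_add, List.countP_append, List.countP_map, occFull]
  congr 1
  refine List.countP_congr fun i hi => ?_
  rw [isOccAt_append_right z (by have := List.mem_range.mp hi; omega)]

/-- Inclusion–exclusion for occurrences: an occurrence of `v` in `x ++ y ++ z` that meets both
`x` and `z` would have to contain `y`, which is too long for that. -/
theorem occFull_append_append_add (x : List A) {y v : List A} (z : List A)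
    (h : v.length ≤ y.length + 1) :
    occFull (x ++ y ++ z) v + occFull y v = occFull (x ++ y) v + occFull (y ++ z) v := by
  rw [occFull_append z (by simp only [List.length_append]; omega), occFull_append z h]
  suffices hz : ∀ j, IsOccAt (x ++ y ++ z) v ((x ++ y).length + 1 - v.length + j)
      = IsOccAt (y ++ z) v (y.length + 1 - v.length + j) by
    simp only [hz]; omega
  intro j
  rw [List.append_assoc, ← isOccAt_append_left x (y ++ z)]
  congr 1
  simp only [List.length_append]
  omega

theorem occR_append_append_add (x : List A) {y v : List A} (z : List A)
    (h : v.length ≤ y.length + 1) :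
    occR (x ++ y ++ z) v + occR y v = occR (x ++ y) v + occR (y ++ z) v := by
  rcases eq_or_ne v [] with rfl | hv
  · simp only [occR_nil, List.length_append]; omega
  · simp only [occR_eq_occFull _ hv]
    exact occFull_append_append_add x z h

theorem isOccAt_reverse {w v : List A} {i : ℕ} (h : i + v.length ≤ w.length) :
    IsOccAt w.reverse v i = IsOccAt w v (w.length - v.length - i) := by
  have hwin : (w.reverse.drop i).take v.length
      = ((w.drop (w.length - v.length - i)).take v.length).reverse := by
    rw [List.drop_reverse, List.take_reverse, List.length_take, List.drop_take]
    congr 3 <;> omega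
  simp only [IsOccAt, hwin, List.reverse_eq_iff, List.reverse_reverse, or_comm]

theorem occFull_reverse (w v : List A) : occFull w.reverse v = occFull w v := by
  set N := w.length + 1 - v.length
  have hreflect : (List.range N).countP (IsOccAt w.reverse v)
      = ((List.range N).map (fun i => N - 1 - i)).countP (IsOccAt w v) := by
    rw [List.countP_map]
    refine List.countP_congr fun i hi => ?_
    have := List.mem_range.mp hi
    rw [Function.comp_apply, isOccAt_reverse (by omega)]
    congr! 2
    omega
  rw [occFull, List.length_reverse, hreflect, ← List.reverse_range, List.countP_reverse, occFull]

theorem occR_reverse (w v : List A) : occR w.reverse v = occR w v := by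
  rcases eq_or_ne v [] with rfl | hv
  · rw [occR_nil, occR_nil, List.length_reverse]
  · rw [occR_eq_occFull _ hv, occR_eq_occFull _ hv, occFull_reverse]

end

namespace LRTT

variable {A : Type*} [DecidableEq A]

theorem self_reverse (k t : ℕ) (w : List A) : LRTT k t w w.reverse := by
  rcases lt_or_ge w.length k with h | h
  · exact Or.inl ⟨h, Or.inr rfl⟩
  refine Or.inr ⟨h, by rwa [List.length_reverse], fun v _ => Or.inl (occR_reverse w v).symm, ?_⟩
  have hsuf : (w.reverse.drop (w.reverse.length - (k - 1))).reverse = w.take (k - 1) := by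
    rw [List.length_reverse, List.drop_reverse, List.reverse_reverse]
    congr 1
    omega
  rw [List.take_reverse, hsuf, Set.pair_comm]

theorem of_occR_eq {k t : ℕ} {w w' : List A} (hw : k ≤ w.length) (hlen : w'.length = w.length)
    (hocc : ∀ v : List A, v.length ≤ k → occR w v = occR w' v)
    (hpre : w'.take (k - 1) = w.take (k - 1))
    (hsuf : w'.drop (w'.length - (k - 1)) = w.drop (w.length - (k - 1))) :
    LRTT k t w w' :=
  Or.inr ⟨hw, hlen ▸ hw, fun v hv => Or.inl (hocc v hv), by rw [hpre, hsuf]⟩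

theorem occR_frame (a b : List A) {p q v : List A} (m : List A)
    (hp : v.length ≤ p.length + 1) (hq : v.length ≤ q.length + 1) :
    occR (a ++ (p ++ m ++ q) ++ b) v + occR p v + occR q v
      = occR (a ++ p) v + occR (p ++ m ++ q) v + occR (q ++ b) v := by
  have hleft := occR_append_append_add a (m ++ q ++ b) hp
  have hright := occR_append_append_add (p ++ m) b hq
  simp only [List.append_assoc] at hleft hright ⊢
  omega

theorem sandwich_reverse (k t : ℕ) (a b p s : List A) (hp : k ≤ p.length) :
    LRTT k t (a ++ (p ++ s ++ p.reverse) ++ b) (a ++ (p ++ s.reverse ++ p.reverse) ++ b) := by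
  have hpr : k ≤ p.reverse.length := by rwa [List.length_reverse]
  have hmirror : (p ++ s ++ p.reverse).reverse = p ++ s.reverse ++ p.reverse := by
    simp only [List.reverse_append, List.reverse_reverse, List.append_assoc]
  have hpre : ∀ m, (a ++ (p ++ m ++ p.reverse) ++ b).take (k - 1) = (a ++ p).take (k - 1) :=
    fun m => by
      rw [show a ++ (p ++ m ++ p.reverse) ++ b = a ++ p ++ (m ++ p.reverse ++ b) by
          simp only [List.append_assoc],
        List.take_append_of_le_length (by simp only [List.length_append]; omega)]
  have hsuf : ∀ m, (a ++ (p ++ m ++ p.reverse) ++ b).drop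
      ((a ++ (p ++ m ++ p.reverse) ++ b).length - (k - 1))
        = (p.reverse ++ b).drop ((p.reverse ++ b).length - (k - 1)) := fun m => by
    rw [show a ++ (p ++ m ++ p.reverse) ++ b = a ++ p ++ m ++ (p.reverse ++ b) by
        simp only [List.append_assoc],
      List.drop_length_sub_append _ (by simp only [List.length_append]; omega)]
  refine of_occR_eq (by simp only [List.length_append]; omega)
    (by simp only [List.length_append, List.length_reverse]) (fun v hv => ?_)
    (by rw [hpre, hpre]) (by rw [hsuf, hsuf])
  have hvp : v.length ≤ p.length + 1 := by omega
  have hvpr : v.length ≤ p.reverse.length + 1 := by omega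
  have hframe := occR_frame a b s hvp hvpr
  have hframe' := occR_frame a b s.reverse hvp hvpr
  rw [← occR_reverse (p ++ s ++ p.reverse), hmirror] at hframe
  omega

end LRTT

namespace SynCong

variable {A : Type*} {L : Set (List A)} {x y z x' y' : List A}

theorem rfl : SynCong L x x := fun _ _ => Iff.rfl

theorem symm (h : SynCong L x y) : SynCong L y x := fun a b => (h a b).symm

theorem trans (h₁ : SynCong L x y) (h₂ : SynCong L y z) : SynCong L x z :=
  fun a b => (h₁ a b).trans (h₂ a b)

theorem append (hx : SynCong L x x') (hy : SynCong L y y') : SynCong L (x ++ y) (x' ++ y') :=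
  fun a b => by
    have h₁ := hx a (y ++ b)
    have h₂ := hy (a ++ x') b
    simp only [List.append_assoc] at h₁ h₂ ⊢
    exact h₁.trans h₂

theorem reverse (hL : ∀ w, w ∈ L ↔ w.reverse ∈ L) (h : SynCong L x y) :
    SynCong L x.reverse y.reverse := fun a b => by
  have h' := h b.reverse a.reverse
  rw [hL, hL (a ++ y.reverse ++ b)]
  simpa only [List.reverse_append, List.reverse_reverse, List.append_assoc] using h'

theorem flatten_replicate_of_idem {u : List A} (hid : SynCong L (u ++ u) u) (n : ℕ) :
    SynCong L (List.replicate (n + 1) u).flatten u := by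
  induction n with
  | zero => simpa using SynCong.rfl
  | succ n ih =>
    rw [List.replicate_succ, List.flatten_cons]
    exact (SynCong.rfl.append ih).trans hid

end SynCong

/-- On representatives: if `[u]` is idempotent then `u s uʳ ~_L u sʳ uʳ`. -/
theorem lrtt_syntactic_identity_general {A : Type*} [DecidableEq A] (k t : ℕ)
    (L : Set (List A)) (hL : ∀ w w' : List A, LRTT k t w w' → (w ∈ L ↔ w' ∈ L))
    (u s : List A) (hu : u ≠ [])
    (hid : SynCong L (u ++ u) u) :
    SynCong L (u ++ s ++ u.reverse) (u ++ s.reverse ++ u.reverse) := by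
  set p := (List.replicate (k + 1) u).flatten
  have hpu : SynCong L p u := SynCong.flatten_replicate_of_idem hid k
  have hp : k ≤ p.length := by
    have := List.length_pos_iff.mpr hu
    simp only [p, List.length_flatten, List.map_replicate, List.sum_replicate, smul_eq_mul]
    nlinarith
  have hrevL : ∀ w, w ∈ L ↔ w.reverse ∈ L := fun w => hL _ _ (LRTT.self_reverse k t w)
  have hframe : ∀ m, SynCong L (u ++ m ++ u.reverse) (p ++ m ++ p.reverse) := fun m =>
    (hpu.symm.append SynCong.rfl).append (hpu.reverse hrevL).symm
  have hmiddle : SynCong L (p ++ s ++ p.reverse) (p ++ s.reverse ++ p.reverse) :=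
    fun a b => hL _ _ (LRTT.sandwich_reverse k t a b p s hp)
  exact ((hframe s).trans hmiddle).trans (hframe s.reverse).symm

/-- If `L` is a union of `≈ᵗₖ`-classes then in its syntactic `⋆`-semigroup every
idempotent `e` and every `x` satisfy `e · x · e⋆ = e · x⋆ · e⋆`; on representatives:
if `[u]` is idempotent then `u s uʳ ~_L u sʳ uʳ`. -/
theorem lrtt_syntactic_identity {A : Type*} [DecidableEq A] (k t : ℕ) (hk : 0 < k) (ht : 0 < t)
    (L : Set (List A)) (hL : ∀ w w' : List A, LRTT k t w w' → (w ∈ L ↔ w' ∈ L))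
    (u s : List A) (hu : u ≠ []) (hs : s ≠ [])
    (hid : SynCong L (u ++ u) u) :
    SynCong L (u ++ s ++ u.reverse) (u ++ s.reverse ++ u.reverse) :=
  lrtt_syntactic_identity_general k t L hL u s hu hid
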